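/- arXiv:1912.00033 — 7 statements merged into one kernel-verified Lean document; each statement's English description precedes it below -/
import Mathlib

section
/- Let C be a bounded self-adjoint operator on a complex Hilbert space ℋ, let t_max > 0, and suppose the one-parameter unitary group U(t) := exp(−i t C) is projectively periodic: there exists λ ∈ ℂ with U(t_max) = λ·id. Let K be any bounded operator on ℋ and define the twirl over one period F := (1/t_max) ∫₀^{t_max} U(t)∘K∘U(t)⁻¹ dt. Then U(s)∘F = F∘U(s) for every s ∈ ℝ, and consequently C∘F = F∘C. (This is the compact-group version of Theorem 1: the G-twirl of a kinematical operator over the compact group generated by the constraint is a Dirac observable.) -/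
/-!
Write `U t = exp (t • A)` with `A = -i C` and `g t = U t K U (-t)`. Since `U tmax` is a scalar it
commutes with `K`, so `g` is `tmax`-periodic; and `U s g t = g (t + s) U s`. Hence multiplying the
integral by `U s` on the left is the same as shifting the window `[0, tmax]` by `s` and then
multiplying on the right, and periodicity undoes the shift. Differentiating `U s F = F U s` at
`s = 0` gives `A F = F A`, i.e. `C F = F C`.
-/

open NormedSpace

section

variable {𝔸 : Type*} [NormedRing 𝔸] [NormedAlgebra ℝ 𝔸] [CompleteSpace 𝔸]

theorem exp_add_smul (A : 𝔸) (a b : ℝ) : exp ((a + b) • A) = exp (a • A) * exp (b • A) := by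
  let +nondep : NormedAlgebra ℚ 𝔸 := .restrictScalars ℚ ℝ 𝔸
  rw [add_smul, exp_add_of_commute (((Commute.refl A).smul_left a).smul_right b)]

theorem exp_smul_mul_exp_neg_smul (A : 𝔸) (t : ℝ) : exp (t • A) * exp (-t • A) = 1 := by
  rw [← exp_add_smul, add_neg_cancel, zero_smul, exp_zero]

theorem exp_neg_smul_mul_exp_smul (A : 𝔸) (t : ℝ) : exp (-t • A) * exp (t • A) = 1 := by
  rw [← exp_add_smul, neg_add_cancel, zero_smul, exp_zero]

theorem periodic_exp_smul_conj {A K : 𝔸} {T : ℝ} (hT : Commute (exp (T • A)) K) :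
    Function.Periodic (fun t : ℝ => exp (t • A) * (K * exp (-t • A))) T := by
  intro t
  simp only [show -(t + T) = -T + -t by ring, exp_add_smul]
  calc exp (t • A) * exp (T • A) * (K * (exp (-T • A) * exp (-t • A)))
      = exp (t • A) * (K * (exp (T • A) * exp (-T • A)) * exp (-t • A)) := by
        rw [← mul_assoc K (exp (T • A)), ← hT.eq]
        noncomm_ring
    _ = exp (t • A) * (K * exp (-t • A)) := by
        rw [exp_smul_mul_exp_neg_smul, mul_one]

theorem commute_exp_smul_intervalIntegral_conj {A K : 𝔸} {T : ℝ}
    (hT : Commute (exp (T • A)) K) (s : ℝ) :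
    Commute (exp (s • A)) (∫ t in (0 : ℝ)..T, exp (t • A) * (K * exp (-t • A))) := by
  set f : ℝ → 𝔸 := fun t => exp (t • A) * (K * exp (-t • A))
  have hexp : Continuous fun t : ℝ => exp (t • A) := (differentiable_exp_smul_const ℝ A).continuous
  have hf : Continuous f := hexp.mul (continuous_const.mul (hexp.comp continuous_neg))
  have hshift : ∀ t, exp (s • A) * f t = f (t + s) * exp (s • A) := by
    intro t
    simp only [f, add_comm t s, show -(s + t) = -t + -s by ring, exp_add_smul]
    calc exp (s • A) * (exp (t • A) * (K * exp (-t • A)))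
        = exp (s • A) * exp (t • A) * (K * (exp (-t • A) * (exp (-s • A) * exp (s • A)))) := by
          rw [exp_neg_smul_mul_exp_smul, mul_one, mul_assoc]
      _ = _ := by noncomm_ring
  calc exp (s • A) * ∫ t in (0 : ℝ)..T, f t
      = ∫ t in (0 : ℝ)..T, exp (s • A) * f t :=
        ((ContinuousLinearMap.mul ℝ 𝔸 (exp (s • A))).intervalIntegral_comp_comm
          (hf.intervalIntegrable 0 T)).symm
    _ = ∫ t in (0 : ℝ)..T, f (t + s) * exp (s • A) := by simp only [hshift]
    _ = (∫ t in (0 : ℝ)..T, f (t + s)) * exp (s • A) :=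
        ((ContinuousLinearMap.mul ℝ 𝔸).flip (exp (s • A))).intervalIntegral_comp_comm
          ((hf.comp (continuous_add_const s)).intervalIntegrable 0 T)
    _ = (∫ t in (0 : ℝ)..T, f t) * exp (s • A) := by
        rw [intervalIntegral.integral_comp_add_right, zero_add, add_comm T,
          (periodic_exp_smul_conj hT).intervalIntegral_add_eq s 0, zero_add]

theorem commute_of_forall_commute_exp_smul {A F : 𝔸} (h : ∀ s : ℝ, Commute (exp (s • A)) F) :
    Commute A F := by
  have hA : HasDerivAt (fun s : ℝ => exp (s • A)) A 0 := by
    simpa using hasDerivAt_exp_smul_const A (0 : ℝ)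
  have hFA : HasDerivAt (fun s : ℝ => exp (s • A) * F) (F * A) 0 := by
    simpa only [(h _).eq] using hA.const_mul F
  exact (hA.mul_const F).unique hFA

end

theorem gTwirl_compact_invariant_general
    {H : Type*} [NormedAddCommGroup H] [InnerProductSpace ℂ H] [CompleteSpace H]
    (C : H →L[ℂ] H)
    (tmax : ℝ)
    (U : ℝ → (H →L[ℂ] H))
    (hU : ∀ t : ℝ, U t = NormedSpace.exp ((-(t : ℂ) * Complex.I) • C))
    (hper : ∃ lam : ℂ, U tmax = lam • (1 : H →L[ℂ] H))
    (K : H →L[ℂ] H)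
    (F : H →L[ℂ] H)
    (hF : F = (1 / tmax) • ∫ t in (0:ℝ)..tmax, (U t).comp (K.comp (U (-t)))) :
    (∀ s : ℝ, (U s).comp F = F.comp (U s)) ∧ C.comp F = F.comp C := by
  obtain ⟨lam, hlam⟩ := hper
  set A : H →L[ℂ] H := (-Complex.I) • C
  have hUA : ∀ t : ℝ, U t = exp (t • A) := by
    intro t
    rw [hU, ← smul_assoc, Complex.real_smul, neg_mul, mul_neg]
  have hK : Commute (exp (tmax • A)) K := by
    rw [← hUA, hlam]
    exact (Commute.one_left K).smul_left lam
  have hUF : ∀ s, Commute (U s) F := by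
    intro s
    have hintegrand : (fun t => (U t).comp (K.comp (U (-t)))) =
        fun t : ℝ => exp (t • A) * (K * exp (-t • A)) := by
      funext t
      rw [hUA, hUA]
      rfl
    rw [hF, hintegrand, hUA]
    exact (commute_exp_smul_intervalIntegral_conj hK s).smul_right _
  refine ⟨hUF, ?_⟩
  have hAF : Commute A F := commute_of_forall_commute_exp_smul fun s => hUA s ▸ hUF s
  exact (Commute.smul_left_iff₀ (neg_ne_zero.mpr Complex.I_ne_zero)).mp hAF

/-- **Compact-group version of Theorem 1.**  Let `C` be a bounded self-adjoint operator on a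
complex Hilbert space, `U t = exp(-i t C)` (so `U (-t)` is the inverse of `U t`), and suppose
`U` is projectively periodic with period `tmax > 0`, i.e. `U tmax = λ • id` for some `λ ∈ ℂ`.
Then for any bounded operator `K`, the twirl over one period
`F = (1/tmax) ∫₀^{tmax} U(t) K U(t)⁻¹ dt` commutes with every `U s` and with `C`. -/
theorem gTwirl_compact_invariant
    {H : Type*} [NormedAddCommGroup H] [InnerProductSpace ℂ H] [CompleteSpace H]
    (C : H →L[ℂ] H) (hC : IsSelfAdjoint C)
    (tmax : ℝ) (htmax : 0 < tmax)
    (U : ℝ → (H →L[ℂ] H))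
    (hU : ∀ t : ℝ, U t = NormedSpace.exp ((-(t : ℂ) * Complex.I) • C))
    (hper : ∃ lam : ℂ, U tmax = lam • (1 : H →L[ℂ] H))
    (K : H →L[ℂ] H)
    (F : H →L[ℂ] H)
    (hF : F = (1 / tmax) • ∫ t in (0:ℝ)..tmax, (U t).comp (K.comp (U (-t)))) :
    (∀ s : ℝ, (U s).comp F = F.comp (U s)) ∧ C.comp F = F.comp C :=
  gTwirl_compact_invariant_general C tmax U hU hper K F hF
end

section
/- Let ℋ be a nonzero finite-dimensional complex Hilbert space, H a self-adjoint operator on ℋ, and t_max > 0. The one-parameter unitary group U(t) := exp(−i t H) is projectively periodic with period t_max (i.e. there exists λ ∈ ℂ with U(t_max) = λ·id) if and only if there exists φ ∈ ℝ such that every eigenvalue ε of H has the form ε = (2π n + φ)/t_max for some integer n. (This is the paper's claim that the group generated by a clock Hamiltonian is compact if and only if the spectrum of the Hamiltonian is 'rational' in this sense.) -/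
/-!
On an eigenvector of `H` with eigenvalue `ε` the operator `exp (-i t H)` acts as the phase
`exp (-i t ε)`. Since `H` has an orthonormal eigenbasis, `exp (-i t H)` is a scalar exactly when
all these phases agree with one phase `exp (-i φ)`, and `exp (-i t ε) = exp (-i φ)` means
`t ε ∈ φ + 2πℤ`.
-/

open Complex

theorem NormedSpace.exp_apply_of_apply_eq_smul {𝕜 E : Type*} [RCLike 𝕜] [NormedAddCommGroup E]
    [NormedSpace 𝕜 E] [CompleteSpace E] {A : E →L[𝕜] E} {μ : 𝕜} {v : E} (hv : A v = μ • v) :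
    NormedSpace.exp A v = NormedSpace.exp μ • v := by
  have hpow (n : ℕ) : (A ^ n) v = μ ^ n • v := by
    induction n with
    | zero => simp
    | succ n ih => rw [pow_succ', mul_apply_eq_comp, ih, map_smul, hv, smul_smul, pow_succ]
  have hA := (NormedSpace.exp_series_hasSum_exp' (𝕂 := 𝕜) A).mapL (ContinuousLinearMap.apply 𝕜 E v)
  have hμ := (NormedSpace.exp_series_hasSum_exp' (𝕂 := 𝕜) μ).smul_const v
  refine hA.unique ?_
  convert hμ using 1
  ext n
  simp [hpow, smul_smul]

theorem LinearMap.IsSymmetric.eq_smul_one_of_forall_eigenvector {𝕜 E : Type*} [RCLike 𝕜]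
    [NormedAddCommGroup E] [InnerProductSpace 𝕜 E] [FiniteDimensional 𝕜 E]
    {T : E →ₗ[𝕜] E} (hT : T.IsSymmetric) (S : E →L[𝕜] E) (c : 𝕜)
    (hS : ∀ (ε : ℝ) (v : E), v ≠ 0 → T v = (ε : 𝕜) • v → S v = c • v) : S = c • 1 := by
  let b := hT.eigenvectorBasis rfl
  refine ContinuousLinearMap.coe_injective (b.toBasis.ext fun i => ?_)
  simpa using hS _ (b i) (b.toBasis.ne_zero i) (hT.apply_eigenvectorBasis rfl i)

theorem Complex.exp_neg_mul_I_eq_iff {t ε φ : ℝ} (ht : t ≠ 0) :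
    cexp (-(t : ℂ) * I * ε) = cexp (-(φ : ℂ) * I) ↔ ∃ n : ℤ, ε = (2 * Real.pi * n + φ) / t := by
  rw [exp_eq_exp_iff_exists_int]
  refine ⟨fun ⟨n, hn⟩ => ⟨-n, ?_⟩, fun ⟨n, hn⟩ => ⟨-n, ?_⟩⟩
  · have h : ((t * ε : ℝ) : ℂ) = ((φ - n * (2 * Real.pi) : ℝ) : ℂ) := by
      apply mul_left_cancel₀ (neg_ne_zero.2 I_ne_zero)
      push_cast
      linear_combination hn
    rw [eq_div_iff ht]
    push_cast
    linarith [ofReal_injective h]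
  · have ht' : (t : ℂ) ≠ 0 := ofReal_ne_zero.2 ht
    rw [hn]
    push_cast
    field_simp
    ring

theorem clock_group_compact_iff_rational_spectrum_general
    {H : Type*} [NormedAddCommGroup H] [InnerProductSpace ℂ H]
    [FiniteDimensional ℂ H]
    (Hop : H →L[ℂ] H) (hHop : IsSelfAdjoint Hop)
    (tmax : ℝ) (htmax : 0 < tmax) :
    (∃ lam : ℂ,
        NormedSpace.exp ((-(tmax : ℂ) * Complex.I) • Hop) = lam • (1 : H →L[ℂ] H))
      ↔ ∃ φ : ℝ, ∀ ε : ℝ, (∃ v : H, v ≠ 0 ∧ Hop v = (ε : ℂ) • v) →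
          ∃ n : ℤ, ε = (2 * Real.pi * (n : ℝ) + φ) / tmax := by
  have hU {ε : ℝ} {v : H} (hv : Hop v = (ε : ℂ) • v) :
      NormedSpace.exp ((-(tmax : ℂ) * I) • Hop) v = cexp (-(tmax : ℂ) * I * ε) • v := by
    rw [exp_eq_exp_ℂ]
    exact NormedSpace.exp_apply_of_apply_eq_smul (by rw [smul_apply, hv, smul_smul])
  constructor
  · rintro ⟨lam, hlam⟩
    have hphase {ε : ℝ} {v : H} (hv0 : v ≠ 0) (hv : Hop v = (ε : ℂ) • v) :
        cexp (-(tmax : ℂ) * I * ε) = lam :=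
      smul_left_injective ℂ hv0 <| (hU hv).symm.trans (by rw [hlam]; rfl)
    by_cases hspec : ∃ ε₀ : ℝ, ∃ v : H, v ≠ 0 ∧ Hop v = (ε₀ : ℂ) • v
    · obtain ⟨ε₀, v₀, hv₀0, hv₀⟩ := hspec
      refine ⟨tmax * ε₀, fun ε ⟨v, hv0, hv⟩ => (exp_neg_mul_I_eq_iff htmax.ne').1 ?_⟩
      rw [hphase hv0 hv, ← hphase hv₀0 hv₀]
      congr 1
      push_cast
      ring
    · exact ⟨0, fun ε hε => absurd ⟨ε, hε⟩ hspec⟩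
  · rintro ⟨φ, hφ⟩
    refine ⟨cexp (-(φ : ℂ) * I), hHop.isSymmetric.eq_smul_one_of_forall_eigenvector
      _ _ fun ε v hv0 hv => ?_⟩
    rw [hU (ε := ε) hv, (exp_neg_mul_I_eq_iff htmax.ne').2 (hφ ε ⟨v, hv0, hv⟩)]

/-- **Compactness of the clock group ↔ rational spectrum.**  On a nonzero finite-dimensional
complex Hilbert space, for a self-adjoint operator `H` and `tmax > 0`, the one-parameter
unitary group `U t = exp(-i t H)` is projectively periodic with period `tmax`
(`U tmax = λ • id` for some `λ ∈ ℂ`) if and only if there exists `φ ∈ ℝ` such that every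
eigenvalue `ε` of `H` has the form `ε = (2 π n + φ)/tmax` for some integer `n`. -/
theorem clock_group_compact_iff_rational_spectrum
    {H : Type*} [NormedAddCommGroup H] [InnerProductSpace ℂ H]
    [FiniteDimensional ℂ H] [Nontrivial H]
    (Hop : H →L[ℂ] H) (hHop : IsSelfAdjoint Hop)
    (tmax : ℝ) (htmax : 0 < tmax) :
    (∃ lam : ℂ,
        NormedSpace.exp ((-(tmax : ℂ) * Complex.I) • Hop) = lam • (1 : H →L[ℂ] H))
      ↔ ∃ φ : ℝ, ∀ ε : ℝ, (∃ v : H, v ≠ 0 ∧ Hop v = (ε : ℂ) • v) →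
          ∃ n : ℤ, ε = (2 * Real.pi * (n : ℝ) + φ) / tmax :=
  clock_group_compact_iff_rational_spectrum_general Hop hHop tmax htmax
end

section
/- In the finite-dimensional discrete-spectrum clock setup, the covariant clock states integrated over one period resolve the identity with normalization constant μ = 1/t_max: (1/t_max) ∫₀^{t_max} |t⟩⟨t| dt = id_{ℋ_C}, where the integral is the Bochner integral of the rank-one operator-valued function t ↦ |t⟩⟨t|. (This is the normalization condition E_T(G) = I_C of the covariant clock POVM for a discrete, non-degenerate, rational-spectrum clock Hamiltonian.) -/
/-!
In the eigenbasis, `|t⟩⟨t| = Σ_{j,k} e^{i(g_j - g_k)} e^{2πi(n_k - n_j)t/t_max} |e_j⟩⟨e_k|`.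
The energies differ by integer multiples of `2π/t_max`, so over one period the off-diagonal
coefficients integrate to `0` (distinct `n_j`) and the diagonal ones to `t_max`, leaving
`t_max Σ_j |e_j⟩⟨e_j| = t_max · id`.
-/

open MeasureTheory

noncomputable section

/-- The rank-one operator `|v⟩⟨w| : ψ ↦ ⟨w, ψ⟩ v` on a complex inner product space. -/
noncomputable def ketbra {H : Type*} [NormedAddCommGroup H] [InnerProductSpace ℂ H]
    (v w : H) : H →L[ℂ] H :=
  (ContinuousLinearMap.toSpanSingleton ℂ v).comp (innerSL ℂ w)

open Complex ComplexConjugate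

theorem integral_exp_two_pi_int_mul_I_div {T : ℝ} (hT : T ≠ 0) (m : ℤ) :
    ∫ t in (0 : ℝ)..T, exp (2 * Real.pi * I * m / T * t) = if m = 0 then (T : ℂ) else 0 := by
  split_ifs with hm
  · simp [hm]
  have hT' : (T : ℂ) ≠ 0 := ofReal_ne_zero.mpr hT
  have hc : 2 * Real.pi * I * m / T ≠ 0 := by simp [hm, hT', Real.pi_ne_zero, I_ne_zero]
  have hperiod : exp (2 * Real.pi * I * m / T * T) = 1 := by
    rw [div_mul_cancel₀ _ hT', ← exp_int_mul_two_pi_mul_I m]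
    ring_nf
  rw [integral_exp_mul_complex hc, hperiod]
  simp

theorem integral_clock_coeff_mul_conj {ι : Type*} [DecidableEq ι] {T φ : ℝ} (hT : T ≠ 0)
    {n : ι → ℤ} (hn : Function.Injective n) (g ε : ι → ℝ)
    (hε : ∀ j, ε j = (2 * Real.pi * (n j : ℝ) + φ) / T) (j k : ι) :
    ∫ t in (0 : ℝ)..T, (exp (I * g j) * exp (-I * ε j * t)) *
        conj (exp (I * g k) * exp (-I * ε k * t))
      = if j = k then (T : ℂ) else 0 := by
  have hprod : ∀ t : ℝ, (exp (I * g j) * exp (-I * ε j * t)) *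
      conj (exp (I * g k) * exp (-I * ε k * t))
        = exp (I * (g j - g k)) * exp (2 * Real.pi * I * ((n k - n j : ℤ) : ℂ) / T * t) := by
    intro t
    rw [map_mul, ← exp_conj, ← exp_conj, mul_mul_mul_comm, ← exp_add, ← exp_add]
    congr 2 <;> simp only [map_mul, map_neg, conj_I, conj_ofReal, hε] <;> push_cast <;>
      field_simp <;> ring
  simp_rw [hprod, intervalIntegral.integral_const_mul, integral_exp_two_pi_int_mul_I_div hT,
    sub_eq_zero, hn.eq_iff, eq_comm (a := k)]
  split_ifs with hjk <;> simp [hjk]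

section Ketbra

variable {H : Type*} [NormedAddCommGroup H] [InnerProductSpace ℂ H]

theorem ketbra_eq_rankOne (v w : H) : ketbra v w = InnerProductSpace.rankOne ℂ v w := rfl

theorem ketbra_sum_smul {ι : Type*} [Fintype ι] (v : ι → H) (c d : ι → ℂ) :
    ketbra (∑ i, c i • v i) (∑ j, d j • v j)
      = ∑ i, ∑ j, (c i * conj (d j)) • ketbra (v i) (v j) := by
  simp only [ketbra_eq_rankOne, map_sum, map_smul, map_smulₛₗ, FunLike.coe_sum, Finset.sum_apply,
    FunLike.coe_smul, Pi.smul_apply, Finset.smul_sum, smul_smul, mul_comm]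
  exact Finset.sum_comm

theorem OrthonormalBasis.sum_ketbra_self {ι : Type*} [Fintype ι] (b : OrthonormalBasis ι ℂ H) :
    ∑ i, ketbra (b i) (b i) = 1 :=
  b.sum_rankOne_eq_id

theorem intervalIntegral_ketbra_sum_smul [CompleteSpace H] {ι : Type*} [Fintype ι]
    [DecidableEq ι] (v : ι → H) {c : ι → ℝ → ℂ} (hc : ∀ i, Continuous (c i)) {a b : ℝ} {L : ℂ}
    (horth : ∀ i j, ∫ t in a..b, c i t * conj (c j t) = if i = j then L else 0) :
    ∫ t in a..b, ketbra (∑ i, c i t • v i) (∑ i, c i t • v i)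
      = L • ∑ i, ketbra (v i) (v i) := by
  have hcoeff : ∀ i j, Continuous fun t => c i t * conj (c j t) := fun i j => by
    have := hc i; have := hc j
    fun_prop
  simp_rw [ketbra_sum_smul]
  rw [intervalIntegral.integral_finsetSum fun i _ =>
    Continuous.intervalIntegrable (by fun_prop) _ _, Finset.smul_sum]
  refine Finset.sum_congr rfl fun i _ => ?_
  rw [intervalIntegral.integral_finsetSum fun j _ =>
    Continuous.intervalIntegrable (by fun_prop) _ _]
  simp [intervalIntegral.integral_smul_const, horth]

end Ketbra

theorem clock_states_resolve_identity_general
    {H : Type*} [NormedAddCommGroup H] [InnerProductSpace ℂ H] [FiniteDimensional ℂ H]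
    (n : ℕ) (b : OrthonormalBasis (Fin n) ℂ H)
    (tmax φ : ℝ) (htmax : 0 < tmax)
    (nj : Fin n → ℤ) (hnj : Function.Injective nj)
    (g : Fin n → ℝ)
    (ε : Fin n → ℝ) (hε : ∀ j, ε j = (2 * Real.pi * (nj j : ℝ) + φ) / tmax)
    (ct : ℝ → H)
    (hct : ∀ t : ℝ, ct t = ∑ j : Fin n,
      (Complex.exp (Complex.I * (g j : ℝ)) * Complex.exp (-Complex.I * (ε j : ℝ) * t)) • b j) :
    (1 / tmax) • (∫ t in (0:ℝ)..tmax, ketbra (ct t) (ct t)) = (1 : H →L[ℂ] H) := by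
  rw [funext hct, intervalIntegral_ketbra_sum_smul b (fun j => by fun_prop)
    (integral_clock_coeff_mul_conj htmax.ne' hnj g ε hε), b.sum_ketbra_self, ← smul_assoc,
    Complex.real_smul, ← Complex.ofReal_mul, one_div_mul_cancel htmax.ne', Complex.ofReal_one,
    one_smul]

/-- **Resolution of the identity by covariant clock states (normalization `μ = 1/t_max`).**
For a finite-dimensional clock with orthonormal eigenbasis `b`, rational spectrum
`ε j = (2π n_j + φ)/t_max` (the `n_j` distinct integers), and covariant clock states
`|t⟩ = Σ_j e^{i g j} e^{-i ε_j t} b j`, one has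
`(1/t_max) ∫₀^{t_max} |t⟩⟨t| dt = id`. -/
theorem clock_states_resolve_identity
    {H : Type*} [NormedAddCommGroup H] [InnerProductSpace ℂ H] [FiniteDimensional ℂ H]
    (n : ℕ) (hn : 1 ≤ n) (b : OrthonormalBasis (Fin n) ℂ H)
    (tmax φ : ℝ) (htmax : 0 < tmax)
    (nj : Fin n → ℤ) (hnj : Function.Injective nj)
    (g : Fin n → ℝ)
    (ε : Fin n → ℝ) (hε : ∀ j, ε j = (2 * Real.pi * (nj j : ℝ) + φ) / tmax)
    (ct : ℝ → H)
    (hct : ∀ t : ℝ, ct t = ∑ j : Fin n,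
      (Complex.exp (Complex.I * (g j : ℝ)) * Complex.exp (-Complex.I * (ε j : ℝ) * t)) • b j) :
    (1 / tmax) • (∫ t in (0:ℝ)..tmax, ketbra (ct t) (ct t)) = (1 : H →L[ℂ] H) :=
  clock_states_resolve_identity_general n b tmax φ htmax nj hnj g ε hε ct hct

end
end

section
/- In the finite-dimensional discrete-spectrum clock setup, the commutator of the first-moment time operator with the clock Hamiltonian is T̂ ∘ Ĥ_C − Ĥ_C ∘ T̂ = i ( id − |t_max⟩⟨t_max| ), where |t_max⟩ = Σ_j e^{i g(j)} e^{−i ε_j t_max} e_j is the clock state at time t_max and |t_max⟩⟨t_max| is the (unnormalized) rank-one operator ψ ↦ ⟨t_max, ψ⟩ |t_max⟩. -/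
/-
Work in the eigenbasis `b` of `Ĥ_C` and compare matrix elements. Since `Ĥ_C b k = ε_k b k`, the
`(j, k)` entry of `[T̂, Ĥ_C]` is `(ε_k - ε_j) T̂_{jk}`, and
`T̂_{jk} = (1/t_max) ∫₀^{t_max} t e^{i(g_j - g_k)} e^{-i(ε_j - ε_k)t} dt`.
The diagonal entries vanish on both sides because the clock amplitudes have modulus one.
Off the diagonal, `(ε_j - ε_k) t_max = 2π(n_j - n_k)` is a nonzero multiple of `2π`, so the
exponential is `t_max`-periodic and its first moment is `∫₀^{t_max} t e^{-iωt} dt = i t_max / ω`;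
this gives the entry `-i e^{i(g_j - g_k)}` of `-i |t_max⟩⟨t_max|`.
-/

open MeasureTheory

noncomputable section

open scoped InnerProductSpace ComplexConjugate
open Complex ContinuousLinearMap

section Ketbra

variable {H : Type*} [NormedAddCommGroup H] [InnerProductSpace ℂ H]

theorem ketbra_apply (v w ψ : H) : ketbra v w ψ = ⟪w, ψ⟫_ℂ • v := rfl

theorem inner_ketbra_apply (x v w y : H) : ⟪x, ketbra v w y⟫_ℂ = ⟪x, v⟫_ℂ * ⟪w, y⟫_ℂ := by
  rw [ketbra_apply, inner_smul_right, mul_comm]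

theorem Continuous.ketbra {α : Type*} [TopologicalSpace α] {u v : α → H} (hu : Continuous u)
    (hv : Continuous v) : Continuous fun t => _root_.ketbra (u t) (v t) := by
  have h : ∀ t, _root_.ketbra (u t) (v t) = smulRightL ℂ H H (innerSL ℂ (v t)) (u t) :=
    fun _ => rfl
  simp only [h]
  exact (smulRightL ℂ H H).continuous₂.comp₂ ((innerSL ℂ).continuous.comp hv) hu

theorem inner_intervalIntegral_smul_ketbra_apply [CompleteSpace H] {u v : ℝ → H}
    (hu : Continuous u) (hv : Continuous v) (a b : ℝ) (x y : H) :
    ⟪x, (∫ t in a..b, t • ketbra (u t) (v t)) y⟫_ℂ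
      = ∫ t in a..b, (t : ℂ) * (⟪x, u t⟫_ℂ * ⟪v t, y⟫_ℂ) := by
  have hcont : Continuous fun t : ℝ => t • ketbra (u t) (v t) := continuous_id.smul (hu.ketbra hv)
  rw [intervalIntegral_apply (hcont.intervalIntegrable a b), ← innerSL_apply_apply ℂ,
    ← (innerSL ℂ x).intervalIntegral_comp_comm
      ((hcont.clm_apply continuous_const).intervalIntegrable a b)]
  simp [inner_ketbra_apply]

variable {ι : Type*} [Fintype ι] (b : OrthonormalBasis ι ℂ H)

theorem OrthonormalBasis.ext_inner_apply {A B : H →L[ℂ] H}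
    (h : ∀ j k, ⟪b j, A (b k)⟫_ℂ = ⟪b j, B (b k)⟫_ℂ) : A = B :=
  coe_injective <| b.toBasis.ext fun k =>
    InnerProductSpace.ext_inner_left_basis b.toBasis fun j => by simpa using h j k

theorem sum_smul_ketbra_apply_basis (c : ι → ℂ) (k : ι) :
    (∑ l, c l • ketbra (b l) (b l)) (b k) = c k • b k := by
  classical
  simp [ketbra_apply, orthonormal_iff_ite.mp b.orthonormal]

theorem inner_basis_sum_smul_ketbra_apply (c : ι → ℂ) (j : ι) (x : H) :
    ⟪b j, (∑ l, c l • ketbra (b l) (b l)) x⟫_ℂ = c j * ⟪b j, x⟫_ℂ := by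
  classical
  simp [ketbra_apply, orthonormal_iff_ite.mp b.orthonormal]

theorem inner_basis_commutator_sum_smul_ketbra (c : ι → ℂ) (A : H →L[ℂ] H) (j k : ι) :
    ⟪b j, (A.comp (∑ l, c l • ketbra (b l) (b l))
        - (∑ l, c l • ketbra (b l) (b l)).comp A) (b k)⟫_ℂ
      = (c k - c j) * ⟪b j, A (b k)⟫_ℂ := by
  rw [sub_apply, comp_apply, comp_apply, sum_smul_ketbra_apply_basis, inner_sub_right,
    inner_basis_sum_smul_ketbra_apply, map_smul, inner_smul_right, sub_mul]

end Ketbra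

theorem integral_ofReal_mul_cexp {c : ℂ} (hc : c ≠ 0) (T : ℝ) :
    ∫ t in (0 : ℝ)..T, (t : ℂ) * exp (c * t)
      = (T / c - 1 / c ^ 2) * exp (c * T) + 1 / c ^ 2 := by
  have hderiv : ∀ t : ℝ, HasDerivAt (fun s : ℝ => ((s : ℂ) / c - 1 / c ^ 2) * exp (c * s))
      ((t : ℂ) * exp (c * t)) t := by
    intro t
    have hlin : HasDerivAt (fun s : ℝ => (s : ℂ) / c - 1 / c ^ 2) (1 / c) t :=
      ((hasDerivAt_id t).ofReal_comp.div_const c).sub_const _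
    have hexp : HasDerivAt (fun s : ℝ => exp (c * s)) (exp (c * t) * c) t := by
      simpa using ((hasDerivAt_id t).ofReal_comp.const_mul c).cexp
    refine (hlin.mul hexp).congr_deriv ?_
    field_simp
    ring
  rw [intervalIntegral.integral_eq_sub_of_hasDerivAt (fun t _ => hderiv t)
    ((show Continuous fun t : ℝ => (t : ℂ) * exp (c * t) by fun_prop).intervalIntegrable 0 T)]
  simp

theorem average_ofReal_mul_cexp_of_cexp_eq_one {T ω : ℝ} (hT : T ≠ 0) (hω : ω ≠ 0)
    (hper : exp (-I * ω * T) = 1) (a : ℂ) :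
    (1 / T) • ∫ t in (0 : ℝ)..T, (t : ℂ) * (a * exp (-I * ω * t)) = a * I / ω := by
  have hc : -I * ω ≠ 0 := mul_ne_zero (neg_ne_zero.mpr I_ne_zero) (ofReal_ne_zero.mpr hω)
  simp_rw [mul_left_comm (_ : ℂ) a, intervalIntegral.integral_const_mul,
    integral_ofReal_mul_cexp hc, hper, real_smul]
  have hT' : (T : ℂ) ≠ 0 := ofReal_ne_zero.mpr hT
  have hω' : (ω : ℂ) ≠ 0 := ofReal_ne_zero.mpr hω
  push_cast
  field_simp
  linear_combination (-(T * a * I * ω)) * I_sq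

theorem cexp_neg_I_mul_mul_eq_one {ω T : ℝ} {m : ℤ} (h : ω * T = 2 * Real.pi * m) :
    exp (-I * ω * T) = 1 := by
  have h' : (ω : ℂ) * T = 2 * Real.pi * m := by exact_mod_cast h
  rw [show -I * ω * T = (-m : ℤ) * (2 * Real.pi * I) by push_cast; linear_combination (-I) * h']
  exact exp_int_mul_two_pi_mul_I _

theorem cexp_I_mul_mul_cexp_conj (α β ω ν t : ℝ) :
    exp (I * α) * exp (-I * ω * t) * conj (exp (I * β) * exp (-I * ν * t))
      = exp (I * ↑(α - β)) * exp (-I * ↑(ω - ν) * t) := by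
  rw [map_mul, ← exp_conj, ← exp_conj, ← exp_add, ← exp_add, ← exp_add, ← exp_add]
  congr 1
  simp only [map_mul, map_neg, conj_I, conj_ofReal]
  push_cast
  ring

theorem time_operator_commutator_general
    {H : Type*} [NormedAddCommGroup H] [InnerProductSpace ℂ H] [FiniteDimensional ℂ H]
    (n : ℕ) (b : OrthonormalBasis (Fin n) ℂ H)
    (tmax φ : ℝ) (htmax : 0 < tmax)
    (nj : Fin n → ℤ) (hnj : Function.Injective nj)
    (g : Fin n → ℝ)
    (ε : Fin n → ℝ) (hε : ∀ j, ε j = (2 * Real.pi * (nj j : ℝ) + φ) / tmax)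
    (ct : ℝ → H)
    (hct : ∀ t : ℝ, ct t = ∑ j : Fin n,
      (Complex.exp (Complex.I * (g j : ℝ)) * Complex.exp (-Complex.I * (ε j : ℝ) * t)) • b j)
    (HC : H →L[ℂ] H) (hHC : HC = ∑ j : Fin n, ((ε j : ℝ) : ℂ) • ketbra (b j) (b j))
    (T : H →L[ℂ] H)
    (hT : T = (1 / tmax) • ∫ t in (0:ℝ)..tmax, t • ketbra (ct t) (ct t)) :
    T.comp HC - HC.comp T
      = Complex.I • ((1 : H →L[ℂ] H) - ketbra (ct tmax) (ct tmax)) := by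
  have hct_cont : Continuous ct := by
    rw [funext hct]
    fun_prop
  have hε_inj : Function.Injective ε := fun j k h => by
    rw [hε, hε, div_left_inj' htmax.ne', add_left_inj, mul_right_inj' (by positivity),
      Int.cast_inj] at h
    exact hnj h
  have hperiod : ∀ j k, (ε j - ε k) * tmax = 2 * Real.pi * ↑(nj j - nj k) := fun j k => by
    rw [hε, hε]
    field_simp
    push_cast
    ring
  refine b.ext_inner_apply fun j k => ?_
  rw [hHC, inner_basis_commutator_sum_smul_ketbra, hT, smul_apply, inner_smul_right_eq_smul,
    inner_intervalIntegral_smul_ketbra_apply hct_cont hct_cont]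
  simp only [smul_apply, inner_smul_right, sub_apply, inner_sub_right, one_apply_eq_self,
    inner_ketbra_apply, hct, b.orthonormal.inner_right_fintype, b.orthonormal.inner_left_fintype,
    cexp_I_mul_mul_cexp_conj]
  rcases eq_or_ne j k with rfl | hjk
  · simp [b.orthonormal.1]
  have hω : ε j - ε k ≠ 0 := sub_ne_zero.mpr (hε_inj.ne hjk)
  have hper := cexp_neg_I_mul_mul_eq_one (hperiod j k)
  rw [average_ofReal_mul_cexp_of_cexp_eq_one htmax.ne' hω hper, hper, b.orthonormal.2 hjk]
  have hω' : (ε j : ℂ) - ε k ≠ 0 := by exact_mod_cast hω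
  push_cast
  field_simp
  ring

/-- **Commutator of the time operator with the clock Hamiltonian.**  For the
finite-dimensional discrete-spectrum clock with Hamiltonian `HC = Σ_j ε_j |b j⟩⟨b j|`,
covariant clock states `|t⟩ = Σ_j e^{i g j} e^{-i ε_j t} b j`, and first-moment time operator
`T = (1/t_max) ∫₀^{t_max} t |t⟩⟨t| dt`, one has
`[T, HC] = i (id - |t_max⟩⟨t_max|)`. -/
theorem time_operator_commutator
    {H : Type*} [NormedAddCommGroup H] [InnerProductSpace ℂ H] [FiniteDimensional ℂ H]
    (n : ℕ) (hn : 1 ≤ n) (b : OrthonormalBasis (Fin n) ℂ H)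
    (tmax φ : ℝ) (htmax : 0 < tmax)
    (nj : Fin n → ℤ) (hnj : Function.Injective nj)
    (g : Fin n → ℝ)
    (ε : Fin n → ℝ) (hε : ∀ j, ε j = (2 * Real.pi * (nj j : ℝ) + φ) / tmax)
    (ct : ℝ → H)
    (hct : ∀ t : ℝ, ct t = ∑ j : Fin n,
      (Complex.exp (Complex.I * (g j : ℝ)) * Complex.exp (-Complex.I * (ε j : ℝ) * t)) • b j)
    (HC : H →L[ℂ] H) (hHC : HC = ∑ j : Fin n, ((ε j : ℝ) : ℂ) • ketbra (b j) (b j))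
    (T : H →L[ℂ] H)
    (hT : T = (1 / tmax) • ∫ t in (0:ℝ)..tmax, t • ketbra (ct t) (ct t)) :
    T.comp HC - HC.comp T
      = Complex.I • ((1 : H →L[ℂ] H) - ketbra (ct tmax) (ct tmax)) :=
  time_operator_commutator_general n b tmax φ htmax nj hnj g ε hε ct hct HC hHC T hT

end
end

section
/- Let H, T̃ : ℝ² → ℝ be differentiable functions on the phase space ℝ², let u : ℝ → ℝ be differentiable, and suppose that on an open set Ω ⊆ ℝ² one has {T̃, H} = u ∘ H and u(H(x)) ≠ 0 for all x ∈ Ω. Then the rescaled clock function T := T̃ / (u ∘ H) is canonically conjugate to the clock Hamiltonian on Ω: {T, H}(x) = 1 for every x ∈ Ω. (This is the paper's construction of a clock function conjugate to H_C from a clock function whose bracket with H_C is a constant of motion.) -/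
noncomputable section

/-- The Poisson bracket of two differentiable functions on the phase space `ℝ²` with
canonical coordinates `(q, p)`:
`{f, g} = (∂f/∂q)(∂g/∂p) - (∂f/∂p)(∂g/∂q)`. -/
noncomputable def poissonBracket (f g : ℝ × ℝ → ℝ) (x : ℝ × ℝ) : ℝ :=
  fderiv ℝ f x (1, 0) * fderiv ℝ g x (0, 1) - fderiv ℝ f x (0, 1) * fderiv ℝ g x (1, 0)

/-! Dividing `T̃` by `u ∘ H` rescales `{T̃, H}` by `1 / u(H)`: the bracket is a derivation in its
first slot, and every function of `H` Poisson-commutes with `H`, so it behaves like a constant. -/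

section

variable {f g H : ℝ × ℝ → ℝ} {φ : ℝ → ℝ} {x : ℝ × ℝ}

theorem poissonBracket_mul (hf : DifferentiableAt ℝ f x) (hg : DifferentiableAt ℝ g x) :
    poissonBracket (fun y => f y * g y) H x =
      f x * poissonBracket g H x + g x * poissonBracket f H x := by
  unfold poissonBracket
  rw [fderiv_fun_mul hf hg]
  simp only [add_apply, smul_apply, smul_eq_mul]
  ring

theorem poissonBracket_comp_self (hφ : DifferentiableAt ℝ φ (H x))
    (hH : DifferentiableAt ℝ H x) : poissonBracket (φ ∘ H) H x = 0 := by
  unfold poissonBracket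
  rw [fderiv_comp x hφ hH]
  simp only [ContinuousLinearMap.comp_apply, fderiv_eq_smul_deriv, smul_eq_mul]
  ring

theorem poissonBracket_mul_comp_self (hf : DifferentiableAt ℝ f x)
    (hφ : DifferentiableAt ℝ φ (H x)) (hH : DifferentiableAt ℝ H x) :
    poissonBracket (fun y => f y * φ (H y)) H x = φ (H x) * poissonBracket f H x := by
  refine (poissonBracket_mul hf (hφ.comp x hH)).trans ?_
  rw [poissonBracket_comp_self hφ hH, mul_zero, zero_add, Function.comp_apply]

end

theorem rescaled_clock_canonically_conjugate_general
    (Ham Tt : ℝ × ℝ → ℝ) (u : ℝ → ℝ)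
    (hHam : Differentiable ℝ Ham) (hTt : Differentiable ℝ Tt) (hu : Differentiable ℝ u)
    (Ω : Set (ℝ × ℝ))
    (hbr : ∀ x ∈ Ω, poissonBracket Tt Ham x = u (Ham x))
    (hne : ∀ x ∈ Ω, u (Ham x) ≠ 0) :
    ∀ x ∈ Ω, poissonBracket (fun y => Tt y / u (Ham y)) Ham x = 1 := by
  intro x hx
  have hinv : DifferentiableAt ℝ (fun t => (u t)⁻¹) (Ham x) := (hu _).inv (hne x hx)
  simp only [div_eq_mul_inv]
  rw [poissonBracket_mul_comp_self (hTt x) hinv (hHam x), hbr x hx]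
  exact inv_mul_cancel₀ (hne x hx)

/-- **Construction of a canonically conjugate clock function.**  If `{T̃, H} = u ∘ H` on an
open set `Ω ⊆ ℝ²` with `u(H x) ≠ 0` there, then the rescaled clock `T := T̃ / (u ∘ H)` is
canonically conjugate to `H` on `Ω`: `{T, H} = 1`. -/
theorem rescaled_clock_canonically_conjugate
    (Ham Tt : ℝ × ℝ → ℝ) (u : ℝ → ℝ)
    (hHam : Differentiable ℝ Ham) (hTt : Differentiable ℝ Tt) (hu : Differentiable ℝ u)
    (Ω : Set (ℝ × ℝ)) (hΩ : IsOpen Ω)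
    (hbr : ∀ x ∈ Ω, poissonBracket Tt Ham x = u (Ham x))
    (hne : ∀ x ∈ Ω, u (Ham x) ≠ 0) :
    ∀ x ∈ Ω, poissonBracket (fun y => Tt y / u (Ham y)) Ham x = 1 :=
  rescaled_clock_canonically_conjugate_general Ham Tt u hHam hTt hu Ω hbr hne

end
end

section
/- Let m, a₁, a₂ > 0 and let H(q, p) := p²/(2m) + a₁ e^{a₂ q} be the exponential-potential clock Hamiltonian on ℝ². On the open set Ω := {(q, p) ∈ ℝ² : p ≠ 0}, define the clock function T(q, p) := −√(2m/p²) · ( p / (a₂ √(H(q,p))) ) · arcoth( √( 2m H(q,p) / p² ) ), where arcoth(x) := (1/2) ln( (x+1)/(x−1) ) for x > 1 (note that 2m H(q,p)/p² > 1 on Ω, so T is well defined). Then T is canonically conjugate to H on Ω: {T, H}(q, p) = 1 for every (q, p) with p ≠ 0. -/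
/-!
In terms of the energy `E = H(q, p)` the clock is a function of `(E, p)` alone,
`Φ(E, p) = -(√(2m) / (a₂ √E)) arcoth(√(2mE) / p)`, the oddness of `arcoth` absorbing the sign
hidden in `√(2m/p²) p`. For any such function the chain rule gives
`{Φ(H, p), H} = ∂_EΦ {H, H} - ∂_pΦ ∂_qH = -∂_pΦ ∂_qH`. Here
`∂_pΦ = -(2m/a₂) / (2mE - p²)`, and `2mH - p² = 2m a₁ e^{a₂q} = (2m/a₂) ∂_qH`, so the bracket is `1`.
-/

noncomputable section

/-- The inverse hyperbolic cotangent, `arcoth x = (1/2) ln((x+1)/(x-1))` for `x > 1`. -/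
noncomputable def arcoth (x : ℝ) : ℝ := (1 / 2) * Real.log ((x + 1) / (x - 1))

open Real

theorem arcoth_neg (x : ℝ) : arcoth (-x) = -arcoth x := by
  rw [arcoth, arcoth, ← mul_neg, ← log_inv, inv_div]
  congr 2
  rw [← neg_div_neg_eq]
  ring_nf

theorem hasDerivAt_arcoth {x : ℝ} (hx : x ^ 2 ≠ 1) : HasDerivAt arcoth (1 - x ^ 2)⁻¹ x := by
  have hm : x - 1 ≠ 0 := fun h => hx (by rw [sub_eq_zero.mp h]; norm_num)
  have hp : x + 1 ≠ 0 := fun h => hx (by rw [eq_neg_of_add_eq_zero_left h]; norm_num)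
  refine (((((hasDerivAt_id' x).add_const 1).div ((hasDerivAt_id' x).sub_const 1) hm).log
    (div_ne_zero hp hm)).const_mul (1 / 2)).congr_deriv ?_
  simp only [Pi.div_apply]
  field_simp
  ring

section PartialDerivatives

variable {𝕜 F : Type*} [NontriviallyNormedField 𝕜] [NormedAddCommGroup F] [NormedSpace 𝕜 F]
  {f : 𝕜 × 𝕜 → F} {x : 𝕜 × 𝕜} {f' : F}

theorem fderiv_apply_one_zero (hf : DifferentiableAt 𝕜 f x)
    (h : HasDerivAt (fun q => f (q, x.2)) f' x.1) : fderiv 𝕜 f x (1, 0) = f' :=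
  (hf.hasFDerivAt.comp_hasDerivAt_of_eq x.1 ((hasDerivAt_id x.1).prodMk (hasDerivAt_const x.1 x.2))
    rfl).unique h

theorem fderiv_apply_zero_one (hf : DifferentiableAt 𝕜 f x)
    (h : HasDerivAt (fun p => f (x.1, p)) f' x.2) : fderiv 𝕜 f x (0, 1) = f' :=
  (hf.hasFDerivAt.comp_hasDerivAt_of_eq x.2 ((hasDerivAt_const x.2 x.1).prodMk (hasDerivAt_id x.2))
    rfl).unique h

end PartialDerivatives

theorem poissonBracket_comp_prod_snd {Φ H : ℝ × ℝ → ℝ} {x : ℝ × ℝ} {Φp Hq : ℝ}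
    (hΦ : DifferentiableAt ℝ Φ (H x, x.2)) (hH : DifferentiableAt ℝ H x)
    (hΦp : HasDerivAt (fun p => Φ (H x, p)) Φp x.2)
    (hHq : HasDerivAt (fun q => H (q, x.2)) Hq x.1) :
    poissonBracket (fun y => Φ (H y, y.2)) H x = -(Φp * Hq) := by
  have hcomp := hΦ.hasFDerivAt.comp x (hH.hasFDerivAt.prodMk hasFDerivAt_snd)
  have hlin : ∀ a b : ℝ, fderiv ℝ Φ (H x, x.2) (a, b)
      = a * fderiv ℝ Φ (H x, x.2) (1, 0) + b * fderiv ℝ Φ (H x, x.2) (0, 1) := by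
    intro a b
    have hab : ((a, b) : ℝ × ℝ) = a • (1, 0) + b • (0, 1) := by ext <;> simp
    rw [hab, map_add, map_smul, map_smul, smul_eq_mul, smul_eq_mul]
  rw [poissonBracket, show (fun y => Φ (H y, y.2)) = Φ ∘ fun y => (H y, y.2) from rfl,
    hcomp.fderiv]
  simp only [ContinuousLinearMap.comp_apply, ContinuousLinearMap.prod_apply,
    ContinuousLinearMap.coe_snd']
  rw [hlin _ 1, hlin _ 0, fderiv_apply_zero_one hΦ hΦp, fderiv_apply_one_zero hH hHq]
  ring

theorem sq_sqrt_div_ne_one {c p : ℝ} (hc : 0 ≤ c) (hp : p ≠ 0) (h : p ^ 2 ≠ c) :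
    (√c / p) ^ 2 ≠ 1 := by
  rw [div_pow, sq_sqrt hc]
  exact fun h' => h ((div_eq_one_iff_eq (pow_ne_zero 2 hp)).mp h').symm

def energyClock (m a2 : ℝ) (z : ℝ × ℝ) : ℝ :=
  -(√(2 * m) / (a2 * √z.1)) * arcoth (√(2 * m * z.1) / z.2)

theorem clock_eq_energyClock (m a2 E p : ℝ) :
    -√(2 * m / p ^ 2) * (p / (a2 * √E)) * arcoth (√(2 * m * E / p ^ 2)) =
      energyClock m a2 (E, p) := by
  rw [energyClock, sqrt_div' _ (sq_nonneg p), sqrt_div' _ (sq_nonneg p), sqrt_sq_eq_abs]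
  rcases lt_trichotomy p 0 with hp | rfl | hp
  · have key : √(2 * m) / p * (p / (a2 * √E)) = √(2 * m) / (a2 * √E) := by
      rw [div_mul_div_comm, mul_comm (√(2 * m)) p, mul_div_mul_left _ _ hp.ne]
    rw [abs_of_neg hp, div_neg, div_neg, arcoth_neg]
    linear_combination (-arcoth (√(2 * m * E) / p)) * key
  · simp [arcoth]
  · have key : √(2 * m) / p * (p / (a2 * √E)) = √(2 * m) / (a2 * √E) := by
      rw [div_mul_div_comm, mul_comm (√(2 * m)) p, mul_div_mul_left _ _ hp.ne']
    rw [abs_of_pos hp]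
    linear_combination (-arcoth (√(2 * m * E) / p)) * key

theorem differentiableAt_energyClock {m a2 : ℝ} {z : ℝ × ℝ} (hm : 0 < m) (hE : 0 < z.1)
    (hp : z.2 ≠ 0) (hgap : z.2 ^ 2 ≠ 2 * m * z.1) : DifferentiableAt ℝ (energyClock m a2) z := by
  have harcoth := (hasDerivAt_arcoth (sq_sqrt_div_ne_one (by positivity) hp hgap)).differentiableAt.comp z
    (by fun_prop (disch := first | positivity | assumption) :
      DifferentiableAt ℝ (fun z : ℝ × ℝ => √(2 * m * z.1) / z.2) z)
  unfold energyClock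
  simp only [div_mul_eq_div_div]
  fun_prop (disch := first | positivity | assumption)

theorem hasDerivAt_energyClock_snd {m a2 E p : ℝ} (hm : 0 < m) (hE : 0 < E) (hp : p ≠ 0)
    (hgap : p ^ 2 ≠ 2 * m * E) :
    HasDerivAt (fun p => energyClock m a2 (E, p)) (-(2 * m / a2) / (2 * m * E - p ^ 2)) p := by
  refine (((hasDerivAt_arcoth (sq_sqrt_div_ne_one (by positivity) hp hgap)).comp p ((hasDerivAt_inv hp).const_mul (√(2 * m * E)))).const_mul
    (-(√(2 * m) / (a2 * √E)))).congr_deriv ?_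
  have hm2 : √(2 * m) ^ 2 = 2 * m := sq_sqrt (by positivity)
  rw [div_pow, sq_sqrt (by positivity : 0 ≤ 2 * m * E), sqrt_mul (by positivity : (0:ℝ) ≤ 2 * m) E]
  field_simp
  rw [hm2]
  ring

/-- **Covariant clock function for the exponential-potential clock Hamiltonian.**
For `H(q,p) = p²/(2m) + a₁ e^{a₂ q}` and
`T(q,p) = -√(2m/p²) (p/(a₂ √H)) arcoth(√(2mH/p²))`, one has `{T, H} = 1` wherever `p ≠ 0`. -/
theorem exponential_potential_clock_conjugate
    (m a1 a2 : ℝ) (hm : 0 < m) (ha1 : 0 < a1) (ha2 : 0 < a2)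
    (Ham : ℝ × ℝ → ℝ)
    (hHam : ∀ x : ℝ × ℝ, Ham x = x.2 ^ 2 / (2 * m) + a1 * Real.exp (a2 * x.1))
    (T : ℝ × ℝ → ℝ)
    (hT : ∀ x : ℝ × ℝ, T x =
      -Real.sqrt (2 * m / x.2 ^ 2) * (x.2 / (a2 * Real.sqrt (Ham x)))
        * arcoth (Real.sqrt (2 * m * Ham x / x.2 ^ 2))) :
    ∀ x : ℝ × ℝ, x.2 ≠ 0 → poissonBracket T Ham x = 1 := by
  intro x hp
  have hV : 0 < 2 * m * (a1 * exp (a2 * x.1)) := by positivity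
  have hHpos : 0 < Ham x := by rw [hHam]; positivity
  have hgap : 2 * m * Ham x - x.2 ^ 2 = 2 * m * (a1 * exp (a2 * x.1)) := by
    rw [hHam]; field_simp; ring
  have hgap' : x.2 ^ 2 ≠ 2 * m * Ham x := (by linarith : x.2 ^ 2 < 2 * m * Ham x).ne
  have hH : Differentiable ℝ Ham := by rw [funext hHam]; fun_prop
  have hHq : HasDerivAt (fun q => Ham (q, x.2)) (a1 * exp (a2 * x.1) * a2) x.1 := by
    simp only [hHam]
    refine ((((hasDerivAt_id' x.1).const_mul a2).exp.const_mul a1).const_add _).congr_deriv ?_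
    ring
  have hT' : T = fun y => energyClock m a2 (Ham y, y.2) :=
    funext fun y => (hT y).trans (clock_eq_energyClock m a2 (Ham y) y.2)
  rw [hT', poissonBracket_comp_prod_snd (differentiableAt_energyClock hm hHpos hp hgap')
    hH.differentiableAt (hasDerivAt_energyClock_snd hm hHpos hp hgap') hHq, hgap]
  field_simp

end
end

section
/- Let a > 0 and c > 0, and consider the bounded clock Hamiltonian Ĥ_C = q̂/c on L²((0,a)), whose covariant clock states have wavefunctions φ_t(q) = e^{−i q t / c}. Then for all smooth compactly supported functions f, g : (0, a) → ℂ, the function t ↦ t · ( ∫₀^a conj(f(q)) e^{−i q t / c} dq ) · ( ∫₀^a e^{i q' t / c} g(q') dq' ) is Lebesgue integrable on ℝ, and (1/(2π)) ∫_ℝ t · ( ∫₀^a conj(f(q)) e^{−i q t / c} dq ) · ( ∫₀^a e^{i q' t / c} g(q') dq' ) dt = i c² ∫₀^a conj(f(q)) g′(q) dq. (This identifies the first-moment time operator of the covariant clock POVM for Ĥ_C = q̂/c as the operator with kernel T(q, q') = i c² δ′(q − q′), i.e. T̂ = i c² d/dq, on smooth compactly supported functions — the paper's Garrison–Wong example of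 a clock Hamiltonian with doubly-bounded spectrum.) -/
open MeasureTheory FourierTransform Real

/-- Fourier transform of a smooth compactly supported function is integrable. -/
lemma integrable_fourier_of_smooth_compact {h : ℝ → ℂ} (hh : ContDiff ℝ (⊤ : ℕ∞) h)
    (hsupp : HasCompactSupport h) : Integrable (𝓕 h) := by
  have hD := contDiff_infty_iff_deriv.mp hh
  have hD2 := contDiff_infty_iff_deriv.mp hD.2
  have hs1 : HasCompactSupport (deriv h) := hsupp.deriv
  have hs2 : HasCompactSupport (deriv (deriv h)) := hs1.deriv
  have hint : Integrable h := hh.continuous.integrable_of_hasCompactSupport hsupp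
  have hint1 : Integrable (deriv h) := hD.2.continuous.integrable_of_hasCompactSupport hs1
  have hint2 : Integrable (deriv (deriv h)) := hD2.2.continuous.integrable_of_hasCompactSupport hs2
  have e1 : 𝓕 (deriv h) = fun ξ : ℝ => (2 * π * Complex.I * ξ) • 𝓕 h ξ :=
    Real.fourier_deriv hint hD.1 hint1
  have e2 : 𝓕 (deriv (deriv h)) = fun ξ : ℝ => (2 * π * Complex.I * ξ) • 𝓕 (deriv h) ξ :=
    Real.fourier_deriv hint1 hD2.1 hint2
  set K : ℝ := (∫ x, ‖h x‖) + (∫ x, ‖deriv (deriv h) x‖) / (4 * π ^ 2) with hK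
  have hM0 : (0:ℝ) ≤ ∫ x, ‖h x‖ := integral_nonneg fun x => norm_nonneg _
  have hM2 : (0:ℝ) ≤ ∫ x, ‖deriv (deriv h) x‖ := integral_nonneg fun x => norm_nonneg _
  have hKnn : 0 ≤ K := by positivity
  have hcont : Continuous (𝓕 h) :=
    VectorFourier.fourierIntegral_continuous Real.continuous_fourierChar
      (by exact continuous_inner) hint
  have hb : ∀ ξ : ℝ, ‖𝓕 h ξ‖ ≤ K * (1 + ξ ^ 2)⁻¹ := by
    intro ξ
    have h0 : ‖𝓕 h ξ‖ ≤ ∫ x, ‖h x‖ :=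
      VectorFourier.norm_fourierIntegral_le_integral_norm _ _ _ _ _
    have hnorm : ‖𝓕 (deriv (deriv h)) ξ‖ = (4 * π ^ 2 * ξ ^ 2) * ‖𝓕 h ξ‖ := by
      rw [e2]
      simp only [e1]
      rw [norm_smul, norm_smul]
      have : ‖(2 * ↑π * Complex.I * (ξ:ℂ) : ℂ)‖ = 2 * π * |ξ| := by
        simp [abs_of_pos Real.pi_pos]
      rw [this]
      rw [← mul_assoc]
      linear_combination (4 * π ^ 2 * ‖𝓕 h ξ‖) * sq_abs ξ
    have h2' : ‖𝓕 (deriv (deriv h)) ξ‖ ≤ ∫ x, ‖deriv (deriv h) x‖ :=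
      VectorFourier.norm_fourierIntegral_le_integral_norm _ _ _ _ _
    have h2 : ξ ^ 2 * ‖𝓕 h ξ‖ ≤ (∫ x, ‖deriv (deriv h) x‖) / (4 * π ^ 2) := by
      rw [le_div_iff₀ (by positivity)]
      nlinarith [hnorm ▸ h2', sq_nonneg ξ, norm_nonneg (𝓕 h ξ)]
    rw [← div_eq_mul_inv, le_div_iff₀ (by positivity), hK]
    nlinarith [norm_nonneg (𝓕 h ξ), h0, h2]
  refine (integrable_inv_one_add_sq.const_mul K).mono hcont.aestronglyMeasurable
    (ae_of_all _ fun ξ => ?_)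
  have : ‖K * (1 + ξ ^ 2)⁻¹‖ = K * (1 + ξ ^ 2)⁻¹ := by
    rw [norm_mul, Real.norm_eq_abs, Real.norm_eq_abs, abs_of_nonneg hKnn,
      abs_of_nonneg (by positivity)]
  rw [this]
  exact hb ξ

/-- **First moment of the covariant clock POVM for `Ĥ_C = q̂/c` on `L²((0,a))` is
`T̂ = i c² d/dq` (kernel `T(q,q') = i c² δ′(q-q′)`).**  For smooth functions `f, g`
compactly supported in `(0,a)`, with clock-state wavefunctions `φ_t(q) = e^{-i q t/c}`,
the function `t ↦ t (∫₀^a conj(f(q)) e^{-i q t/c} dq)(∫₀^a e^{i q' t/c} g(q') dq')`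
is Lebesgue integrable on `ℝ` and
`(1/(2π)) ∫_ℝ t (∫₀^a conj(f) e^{-iqt/c})(∫₀^a e^{iq't/c} g) dt = i c² ∫₀^a conj(f) g′`. -/
theorem garrison_wong_time_operator
    (a c : ℝ) (ha : 0 < a) (hc : 0 < c)
    (f g : ℝ → ℂ)
    (hf : ContDiff ℝ (⊤ : ℕ∞) f) (hg : ContDiff ℝ (⊤ : ℕ∞) g)
    (hfc : HasCompactSupport f) (hgc : HasCompactSupport g)
    (hfs : tsupport f ⊆ Set.Ioo 0 a) (hgs : tsupport g ⊆ Set.Ioo 0 a) :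
    Integrable (fun t : ℝ =>
        (t : ℂ)
          * (∫ q in (0:ℝ)..a, (starRingEnd ℂ) (f q) * Complex.exp (-Complex.I * q * t / c))
          * (∫ q' in (0:ℝ)..a, Complex.exp (Complex.I * q' * t / c) * g q')) volume
    ∧ (1 / (2 * (Real.pi : ℂ)))
        * (∫ t : ℝ,
            (t : ℂ)
              * (∫ q in (0:ℝ)..a, (starRingEnd ℂ) (f q) * Complex.exp (-Complex.I * q * t / c))
              * (∫ q' in (0:ℝ)..a, Complex.exp (Complex.I * q' * t / c) * g q'))
      = Complex.I * (c : ℂ) ^ 2 * ∫ q in (0:ℝ)..a, (starRingEnd ℂ) (f q) * deriv g q := by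
  have hπ : (π : ℂ) ≠ 0 := Complex.ofReal_ne_zero.mpr Real.pi_ne_zero
  have hcℂ : (c : ℂ) ≠ 0 := Complex.ofReal_ne_zero.mpr hc.ne'
  have hb0 : (2 * π * c : ℝ) ≠ 0 := by positivity
  set fc : ℝ → ℂ := fun q => (starRingEnd ℂ) (f q) with hfc_def
  -- basic facts about fc
  have hfc_cont : Continuous fc := Complex.continuous_conj.comp hf.continuous
  have hfc_supp : HasCompactSupport fc := hfc.comp_left (map_zero _)
  have hfc_int : Integrable fc := hfc_cont.integrable_of_hasCompactSupport hfc_supp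
  -- facts about g
  have hg' : ContDiff ℝ (⊤ : ℕ∞) g := hg.of_le (by simp)
  have hgD := contDiff_infty_iff_deriv.mp hg'
  have hg'_supp : HasCompactSupport (deriv g) := hgc.deriv
  have hg_int : Integrable g := hg.continuous.integrable_of_hasCompactSupport hgc
  have hg'_int : Integrable (deriv g) :=
    hgD.2.continuous.integrable_of_hasCompactSupport hg'_supp
  have hGint : Integrable (𝓕 (deriv g)) := by
    exact integrable_fourier_of_smooth_compact hgD.2 hg'_supp
  -- interval integrals as Fourier transforms
  have key1 : ∀ t : ℝ,
      (∫ q in (0:ℝ)..a, fc q * Complex.exp (-Complex.I * q * t / c))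
        = 𝓕 fc ((2 * π * c)⁻¹ * t) := by
    intro t
    rw [intervalIntegral.integral_eq_integral_of_support_subset (by
      intro q hq
      simp only [Function.mem_support, ne_eq] at hq
      have hfq : q ∈ Function.support f := by
        simp only [Function.mem_support, ne_eq]
        intro h0
        exact hq (by simp [fc, h0])
      exact Set.Ioo_subset_Ioc_self (hfs (subset_tsupport f hfq)))]
    rw [Real.fourier_real_eq_integral_exp_smul]
    congr 1
    funext q
    have hAB : Complex.exp (((-2 * π * q * ((2*π*c)⁻¹ * t) : ℝ) : ℂ) * Complex.I)
        = Complex.exp (-Complex.I * q * t / c) := by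
      rw [show (-2 * π * q * ((2*π*c)⁻¹ * t) : ℝ) = -(q * t / c) by
        field_simp [Real.pi_ne_zero, hc.ne']]
      push_cast
      congr 1
      ring
    rw [hAB, smul_eq_mul, mul_comm]
  have key2 : ∀ t : ℝ,
      (∫ q' in (0:ℝ)..a, Complex.exp (Complex.I * q' * t / c) * g q')
        = 𝓕 g (-(2 * π * c)⁻¹ * t) := by
    intro t
    rw [intervalIntegral.integral_eq_integral_of_support_subset (by
      intro q hq
      simp only [Function.mem_support, ne_eq] at hq
      have hgq : q ∈ Function.support g := by
        simp only [Function.mem_support, ne_eq]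
        intro h0
        exact hq (by simp [h0])
      exact Set.Ioo_subset_Ioc_self (hgs (subset_tsupport g hgq)))]
    rw [Real.fourier_real_eq_integral_exp_smul]
    congr 1
    funext q
    have hAB : Complex.exp (((-2 * π * q * (-(2*π*c)⁻¹ * t) : ℝ) : ℂ) * Complex.I)
        = Complex.exp (Complex.I * q * t / c) := by
      rw [show (-2 * π * q * (-(2*π*c)⁻¹ * t) : ℝ) = q * t / c by
        field_simp [Real.pi_ne_zero, hc.ne']]
      push_cast
      congr 1
      ring
    rw [hAB, smul_eq_mul]
  have e : 𝓕 (deriv g) = fun x : ℝ => (2 * π * Complex.I * x) • 𝓕 g x :=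
    Real.fourier_deriv hg_int hgD.1 hg'_int
  have hscal : ∀ t : ℝ,
      Complex.I * (c:ℂ) * (2 * (π:ℂ) * Complex.I * ((-(2*π*c)⁻¹ * t : ℝ) : ℂ)) = (t:ℂ) := by
    intro t
    have h1 : ((-(2*π*c)⁻¹ * t : ℝ) : ℂ) = -((t:ℂ) / (2*(π:ℂ)*c)) := by push_cast; ring
    rw [h1]
    rw [show Complex.I * (c:ℂ) * (2 * (π:ℂ) * Complex.I * (-((t:ℂ)/(2*(π:ℂ)*(c:ℂ)))))
        = (Complex.I * Complex.I) * (-((c:ℂ) * 2 * (π:ℂ) * (t:ℂ) / (2*(π:ℂ)*(c:ℂ)))) from by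
      ring]
    rw [Complex.I_mul_I]
    field_simp [hπ, hcℂ]
  have keyI : (fun t : ℝ =>
        (t : ℂ)
          * (∫ q in (0:ℝ)..a, fc q * Complex.exp (-Complex.I * q * t / c))
          * (∫ q' in (0:ℝ)..a, Complex.exp (Complex.I * q' * t / c) * g q'))
      = fun t : ℝ => Complex.I * (c:ℂ)
          * (𝓕 fc ((2*π*c)⁻¹ * t) * 𝓕 (deriv g) (-(2*π*c)⁻¹ * t)) := by
    funext t
    rw [key1 t, key2 t, e]
    simp only [smul_eq_mul]
    rw [← hscal t]
    ring
  -- integrability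
  have hFcont : Continuous (𝓕 fc) :=
    VectorFourier.fourierIntegral_continuous Real.continuous_fourierChar
      (by exact continuous_inner) hfc_int
  have hfcF_bdd : ∀ t : ℝ, ‖Complex.I * (c:ℂ) * 𝓕 fc ((2*π*c)⁻¹ * t)‖ ≤ c * ∫ x, ‖fc x‖ := by
    intro t
    rw [norm_mul, norm_mul, Complex.norm_I, one_mul, Complex.norm_real, Real.norm_eq_abs,
      abs_of_pos hc]
    exact mul_le_mul_of_nonneg_left
      (VectorFourier.norm_fourierIntegral_le_integral_norm _ _ _ _ _) hc.le
  have hint_comp : Integrable fun t : ℝ => 𝓕 (deriv g) (-(2*π*c)⁻¹ * t) :=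
    hGint.comp_mul_left' (neg_ne_zero.mpr (inv_ne_zero hb0))
  have hmain_int : Integrable (fun t : ℝ => Complex.I * (c:ℂ)
      * (𝓕 fc ((2*π*c)⁻¹ * t) * 𝓕 (deriv g) (-(2*π*c)⁻¹ * t))) := by
    have hb := hint_comp.bdd_mul
      ((continuous_const.mul (hFcont.comp (continuous_const.mul continuous_id))).aestronglyMeasurable)
      (ae_of_all _ fun t => hfcF_bdd t)
    have : (fun t : ℝ => (Complex.I * (c:ℂ) * 𝓕 fc ((2*π*c)⁻¹ * t))
        * (𝓕 (deriv g) (-(2*π*c)⁻¹ * t)))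
        = fun t : ℝ => Complex.I * (c:ℂ)
          * (𝓕 fc ((2*π*c)⁻¹ * t) * 𝓕 (deriv g) (-(2*π*c)⁻¹ * t)) := by
      funext t; ring
    rw [← this]
    exact hb
  -- the multiplication formula / inversion part
  have hflip : (innerₗ ℝ).flip = innerₗ ℝ := by
    apply LinearMap.ext; intro x; apply LinearMap.ext; intro y
    simp only [LinearMap.flip_apply, innerₗ_apply_apply]
    exact real_inner_comm x y
  have hinv : 𝓕⁻ (𝓕 (deriv g)) = deriv g :=
    hgD.2.continuous.fourierInv_fourier_eq hg'_int hGint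
  have hfcn_int : Integrable (fun x : ℝ => fc (-x)) := hfc_int.comp_neg
  set H : ℝ → ℂ := fun ξ => 𝓕 fc (-ξ) * 𝓕 (deriv g) ξ with hH_def
  have hH : ∫ ξ, H ξ = ∫ q : ℝ, fc q * deriv g q := by
    have h1 : ∀ ξ : ℝ, H ξ = 𝓕 (fun x => fc (-x)) ξ * 𝓕 (deriv g) ξ := by
      intro ξ
      show 𝓕 fc (-ξ) * 𝓕 (deriv g) ξ = _
      rw [← Real.fourierInv_eq_fourier_neg,
        Real.fourierInv_eq_fourier_comp_neg]
    have hmul : ∫ ξ, 𝓕 (fun x => fc (-x)) ξ * 𝓕 (deriv g) ξ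
        = ∫ x, fc (-x) * 𝓕 (𝓕 (deriv g)) x := by
      have hfl := VectorFourier.integral_fourierIntegral_smul_eq_flip
        (L := innerₗ ℝ) Real.continuous_fourierChar (by exact continuous_inner)
        hfcn_int hGint
      rw [hflip] at hfl
      simp only [smul_eq_mul] at hfl
      exact hfl
    have h2 : ∀ x : ℝ, 𝓕 (𝓕 (deriv g)) x = deriv g (-x) := by
      intro x
      rw [show 𝓕 (𝓕 (deriv g)) x = 𝓕⁻ (𝓕 (deriv g)) (-x) by
        rw [Real.fourierInv_eq_fourier_neg, neg_neg], hinv]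
    calc ∫ ξ, H ξ = ∫ ξ, 𝓕 (fun x => fc (-x)) ξ * 𝓕 (deriv g) ξ := by
          simp only [h1]
      _ = ∫ x, fc (-x) * 𝓕 (𝓕 (deriv g)) x := hmul
      _ = ∫ x : ℝ, fc (-x) * deriv g (-x) := by simp only [h2]
      _ = ∫ q : ℝ, fc q * deriv g q :=
          integral_neg_eq_self (fun q : ℝ => fc q * deriv g q) volume
  have habs : |(-(2*π*c)⁻¹)⁻¹| = 2*π*c := by
    rw [inv_neg, inv_inv, abs_neg, abs_of_pos (by positivity)]
  have hval : (∫ t : ℝ,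
        (t : ℂ)
          * (∫ q in (0:ℝ)..a, fc q * Complex.exp (-Complex.I * q * t / c))
          * (∫ q' in (0:ℝ)..a, Complex.exp (Complex.I * q' * t / c) * g q'))
      = Complex.I * (c:ℂ) * ((2*π*c : ℝ) • ∫ q : ℝ, fc q * deriv g q) := by
    rw [keyI]
    have step1 : (∫ t : ℝ, Complex.I * (c:ℂ)
        * (𝓕 fc ((2*π*c)⁻¹ * t) * 𝓕 (deriv g) (-(2*π*c)⁻¹ * t)))
        = Complex.I * (c:ℂ) * ∫ t : ℝ, H (-(2*π*c)⁻¹ * t) := by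
      rw [integral_const_mul]
      have heq : (fun t : ℝ => 𝓕 fc ((2*π*c)⁻¹ * t) * 𝓕 (deriv g) (-(2*π*c)⁻¹ * t))
          = fun t : ℝ => H (-(2*π*c)⁻¹ * t) := by
        funext t
        simp only [hH_def, neg_mul, neg_neg]
      rw [heq]
    rw [step1, MeasureTheory.Measure.integral_comp_mul_left H (-(2*π*c)⁻¹), habs, hH]
  have hRHS : (∫ q in (0:ℝ)..a, fc q * deriv g q) = ∫ q : ℝ, fc q * deriv g q := by
    apply intervalIntegral.integral_eq_integral_of_support_subset
    intro q hq
    simp only [Function.mem_support, ne_eq] at hq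
    have hdq : q ∈ Function.support (deriv g) := by
      simp only [Function.mem_support, ne_eq]
      intro h0
      exact hq (by simp [h0])
    exact Set.Ioo_subset_Ioc_self (hgs (support_deriv_subset hdq))
  refine ⟨by rw [keyI]; exact hmain_int, ?_⟩
  rw [hval, hRHS, Complex.real_smul]
  push_cast
  field_simp
end
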